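/- arXiv:1902.04903 — 7 statements merged into one kernel-verified Lean document; each statement's English description precedes it below -/
import Mathlib

section
/- Let k<n, let P1,…,Pn be pairwise distinct columns of the semigeneric directed graph 𝕊, and let y1∈P1,…,yk∈Pk. Let ε_i^j∈{0,1} be given for all pairs 1≤i<j≤n with j>k. Then there exist y_{k+1}∈P_{k+1},…,y_n∈P_n such that for all i<j with j>k: y_i→y_j holds if and only if ε_i^j=1. -/
/-- `x ⊥ y`: there is no edge between `x` and `y`. -/
def Perp {V : Type*} (E : V → V → Prop) (x y : V) : Prop := ¬ E x y ∧ ¬ E y x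

/-- A directed graph: an irreflexive relation such that `x → y` and `y → x` never both hold. -/
def IsDigraph {V : Type*} (E : V → V → Prop) : Prop :=
  (∀ x, ¬ E x x) ∧ ∀ x y, E x y → ¬ E y x

open Classical in
/-- The parity condition: for `x1 ≠ x2` in a common column and `y1 ≠ y2` in a common
column, the number of pairs `(i,j)` with `x_i → y_j` is even. -/
def ParityCond {V : Type*} (E : V → V → Prop) : Prop :=
  ∀ x1 x2 y1 y2 : V, x1 ≠ x2 → y1 ≠ y2 → Perp E x1 x2 → Perp E y1 y2 →
    Even ((if E x1 y1 then 1 else 0) + (if E x1 y2 then 1 else 0) +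
      (if E x2 y1 then 1 else 0) + (if E x2 y2 then 1 else 0))

/-- Membership in the class `𝒮`: a digraph in which `⊥` is an equivalence relation and
the parity condition holds. -/
def InClassS {V : Type*} (E : V → V → Prop) : Prop :=
  IsDigraph E ∧ Equivalence (Perp E) ∧ ParityCond E

/-- `(S, E)` is (a copy of) the semigeneric directed graph: a countably infinite directed
graph, ultrahomogeneous, whose age is exactly the class `𝒮`. (Since the defining conditions
of `𝒮` are preserved under taking induced substructures, the inclusion of the age in `𝒮`
amounts to `(S, E)` itself satisfying them.) -/
structure IsSemigeneric (S : Type*) (E : S → S → Prop) : Prop where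
  countable : Countable S
  infinite : Infinite S
  inS : InClassS E
  ultrahomogeneous : ∀ (F : Finset S) (f : S → S), Set.InjOn f ↑F →
    (∀ a ∈ F, ∀ b ∈ F, (E (f a) (f b) ↔ E a b)) →
    ∃ g : Equiv.Perm S, (∀ x y, E (g x) (g y) ↔ E x y) ∧ ∀ a ∈ F, g a = f a
  rich : ∀ (A : Type) (_ : Finite A) (EA : A → A → Prop), InClassS EA →
    ∃ f : A → S, Function.Injective f ∧ ∀ a b, E (f a) (f b) ↔ EA a b

/-- `g` is an automorphism of the digraph `(S, E)`. -/
def IsAut {S : Type*} (E : S → S → Prop) (g : Equiv.Perm S) : Prop :=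
  ∀ x y, E (g x) (g y) ↔ E x y

/-!
Pick a representative `w i` of each column `P_i` (`y_i` when `i < k`) and build a finite
digraph on two copies of the columns: `(i, false)` plays `w i`, and `(j, true)` is a new point
of column `j`. Edges between distinct columns `a, b` are those of the representatives, switched
by a twist `τ x b` of each endpoint `x` towards the other column; the parity condition survives
because each twist enters a four-vertex count twice. Twisting `(j, true)` towards the earlier
columns by the discrepancy with `ε` realises the prescribed edges. By richness this digraph
embeds into `𝕊`, and by ultrahomogeneity the embedding can be moved so that `(i, false)` lands
on `w i`.
-/

theorem decide_swap_of_not_perp {V : Type*} {E : V → V → Prop} [DecidableRel E]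
    (hE : IsDigraph E) {x y : V} (hxy : ¬ Perp E x y) : decide (E y x) = !decide (E x y) := by
  by_cases h : E x y
  · simp [h, hE.2 _ _ h]
  · simp [h, not_not.1 fun h' => hxy ⟨h, h'⟩]

theorem perp_iff_of_rel_iff {V W : Type*} {E : V → V → Prop} {E' : W → W → Prop} {h : W → V}
    (hh : ∀ a b, E (h a) (h b) ↔ E' a b) (a b : W) : Perp E (h a) (h b) ↔ Perp E' a b := by
  simp only [Perp, hh]

section Switching

variable {V C : Type*}

def switchedRel (col : V → C) (T : C → C → Bool) (τ : V → C → Bool) (x u : V) : Prop :=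
  col x ≠ col u ∧ (T (col x) (col u) ^^ τ x (col u) ^^ τ u (col x)) = true

variable {col : V → C} {T : C → C → Bool} {τ : V → C → Bool}

theorem switchedRel_iff_of_ne {x u : V} (hxu : col x ≠ col u) :
    switchedRel col T τ x u ↔ (T (col x) (col u) ^^ τ x (col u) ^^ τ u (col x)) = true :=
  and_iff_right hxu

theorem switchedRel_swap_iff (hT : ∀ a b, a ≠ b → T b a = !T a b) {x u : V}
    (hxu : col x ≠ col u) : switchedRel col T τ u x ↔ ¬ switchedRel col T τ x u := by
  rw [switchedRel_iff_of_ne hxu, switchedRel_iff_of_ne (Ne.symm hxu), hT _ _ hxu]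
  cases T (col x) (col u) <;> cases τ x (col u) <;> cases τ u (col x) <;> decide

theorem perp_switchedRel_iff (hT : ∀ a b, a ≠ b → T b a = !T a b) {x u : V} :
    Perp (switchedRel col T τ) x u ↔ col x = col u := by
  refine ⟨fun ⟨hxu, hux⟩ => ?_, fun h => ⟨fun hxu => hxu.1 h, fun hux => hux.1 h.symm⟩⟩
  by_contra hne
  exact hux ((switchedRel_swap_iff hT hne).2 hxu)

theorem inClassS_switchedRel (hT : ∀ a b, a ≠ b → T b a = !T a b) :
    InClassS (switchedRel col T τ) := by
  have hperp : ∀ x u, Perp (switchedRel col T τ) x u ↔ col x = col u :=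
    fun _ _ => perp_switchedRel_iff hT
  refine ⟨⟨fun x hx => hx.1 rfl,
      fun x u hxu hux => (switchedRel_swap_iff hT hxu.1).1 hux hxu⟩,
    ⟨fun x => (hperp x x).2 rfl, fun h => (hperp _ _).2 ((hperp _ _).1 h).symm,
      fun h₁ h₂ => (hperp _ _).2 (((hperp _ _).1 h₁).trans ((hperp _ _).1 h₂))⟩, ?_⟩
  intro x₁ x₂ u₁ u₂ _ _ hx hu
  rw [hperp] at hx hu
  by_cases hxu : col x₁ = col u₁
  · have hno : ∀ x u, col x = col x₁ → col u = col u₁ → ¬ switchedRel col T τ x u :=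
      fun x u hx' hu' h => h.1 (by rw [hx', hu', hxu])
    simp [hno, hx, hu]
  · simp only [switchedRel_iff_of_ne, hxu, ← hx, ← hu, ne_eq, not_false_eq_true]
    generalize T (col x₁) (col u₁) = t
    generalize τ x₁ (col u₁) = a₁; generalize τ x₂ (col u₁) = a₂
    generalize τ u₁ (col x₁) = b₁; generalize τ u₂ (col x₁) = b₂
    revert t a₁ a₂ b₁ b₂
    decide

end Switching

section PrescribedTwist

variable {n : ℕ} (T ε : Fin n → Fin n → Bool)

def prescribedTwist (x : Fin n × Bool) (m : Fin n) : Bool :=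
  x.2 && decide (m < x.1) && (T m x.1 ^^ ε m x.1)

theorem switchedRel_prescribedTwist_false_false_iff (i j : Fin n) :
    switchedRel Prod.fst T (prescribedTwist T ε) (i, false) (j, false) ↔
      i ≠ j ∧ T i j = true := by
  simp [switchedRel, prescribedTwist]

theorem switchedRel_prescribedTwist_true_iff {x : Fin n × Bool} {j : Fin n} (hxj : x.1 < j) :
    switchedRel Prod.fst T (prescribedTwist T ε) x (j, true) ↔ ε x.1 j = true := by
  simp [switchedRel, prescribedTwist, hxj, hxj.ne, not_lt.2 hxj.le]

end PrescribedTwist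

theorem IsSemigeneric.exists_extension {S : Type*} {E : S → S → Prop}
    (hS : IsSemigeneric S E)
    {A : Type} [Finite A] {EA : A → A → Prop} (hA : InClassS EA)
    {B : Type*} [Finite B] {ι : B → A} (hι : Function.Injective ι)
    {w : B → S} (hw : Function.Injective w) (hwE : ∀ b b', E (w b) (w b') ↔ EA (ι b) (ι b')) :
    ∃ h : A → S, (∀ b, h (ι b) = w b) ∧ ∀ a a', E (h a) (h a') ↔ EA a a' := by
  obtain ⟨f, hf, hfE⟩ := hS.rich A inferInstance EA hA
  have hfι : Function.Injective (f ∘ ι) := hf.comp hι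
  have hφ : ∀ b, Function.extend (f ∘ ι) w id (f (ι b)) = w b := hfι.extend_apply w id
  have hF : ((Set.finite_range (f ∘ ι)).toFinset : Set S) = Set.range (f ∘ ι) :=
    Set.Finite.coe_toFinset _
  obtain ⟨g, hg, hgφ⟩ := hS.ultrahomogeneous _ (Function.extend (f ∘ ι) w id)
    (by
      rw [hF]
      rintro _ ⟨b, rfl⟩ _ ⟨b', rfl⟩ hbb'
      simp only [Function.comp_apply, hφ] at hbb' ⊢
      rw [hw hbb'])
    (by
      simp only [Set.Finite.mem_toFinset, Set.mem_range, Function.comp_apply]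
      rintro _ ⟨b, rfl⟩ _ ⟨b', rfl⟩
      rw [hφ, hφ, hwE, hfE])
  refine ⟨g ∘ f, fun b => ?_, fun a a' => (hg _ _).trans (hfE a a')⟩
  simpa [hφ] using hgφ (f (ι b)) (by simp)

theorem IsSemigeneric.exists_doubled_columns_with_prescribed_edges {S : Type*}
    {E : S → S → Prop} (hS : IsSemigeneric S E) {n : ℕ} {w : Fin n → S}
    (hw : ∀ i j, i ≠ j → ¬ Perp E (w i) (w j))
    (ε : Fin n → Fin n → Bool) :
    ∃ h : Fin n × Bool → S, (∀ i, h (i, false) = w i) ∧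
      (∀ x u, Perp E (h x) (h u) ↔ x.1 = u.1) ∧
      ∀ x j, x.1 < j → (E (h x) (h (j, true)) ↔ ε x.1 j = true) := by
  classical
  obtain ⟨hdig, hperp, -⟩ := hS.inS
  let T : Fin n → Fin n → Bool := fun a b => decide (E (w a) (w b))
  have hT : ∀ a b, a ≠ b → T b a = !T a b := fun a b hab =>
    decide_swap_of_not_perp hdig (hw a b hab)
  obtain ⟨h, hh_false, hh⟩ := hS.exists_extension
    (inClassS_switchedRel (col := Prod.fst) (τ := prescribedTwist T ε) hT)
    (fun i j hij => (Prod.mk.inj hij).1) (w := w)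
    (fun i j hij => by_contra fun hne => hw i j hne (hij ▸ hperp.refl (w i)))
    (fun i j => by
      rw [switchedRel_prescribedTwist_false_false_iff]
      exact ⟨fun he => ⟨fun hij => hdig.1 _ (hij ▸ he), decide_eq_true he⟩,
        fun he => of_decide_eq_true he.2⟩)
  refine ⟨h, hh_false, fun x u => ?_, fun x j hxj => ?_⟩
  · rw [perp_iff_of_rel_iff hh, perp_switchedRel_iff hT]
  · rw [hh, switchedRel_prescribedTwist_true_iff T ε hxj]

/-- Lemma on realizing prescribed edge patterns. Let `P_1, …, P_n` be pairwise
distinct columns of the semigeneric digraph (represented by points `p 1, …, p n`, with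
distinctness of columns expressed by `¬ (p i ⊥ p j)` for `i ≠ j`), let `y_1 ∈ P_1, …,
y_k ∈ P_k` be given, and let `ε_i^j ∈ {0,1}` be given for `1 ≤ i < j ≤ n` with `j > k`.
Then there are `y_{k+1} ∈ P_{k+1}, …, y_n ∈ P_n` such that for all `i < j` with `j > k`,
`y_i → y_j` iff `ε_i^j = 1`. -/
theorem exists_points_with_prescribed_edges {S : Type*} (E : S → S → Prop)
    (hS : IsSemigeneric S E) (k n : ℕ) (hkn : k < n)
    (p : Fin n → S) (hp : ∀ i j : Fin n, i ≠ j → ¬ Perp E (p i) (p j))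
    (y : Fin k → S) (hy : ∀ i : Fin k, Perp E (y i) (p (Fin.castLE hkn.le i)))
    (ε : Fin n → Fin n → Bool) :
    ∃ z : Fin n → S,
      (∀ i : Fin k, z (Fin.castLE hkn.le i) = y i) ∧
      (∀ j : Fin n, Perp E (z j) (p j)) ∧
      (∀ i j : Fin n, i < j → k ≤ (j : ℕ) →
        (E (z i) (z j) ↔ ε i j = true)) := by
  obtain ⟨-, hperp, -⟩ := hS.inS
  let w : Fin n → S := fun i => if h : (i : ℕ) < k then y ⟨i, h⟩ else p i
  have hwp : ∀ i, Perp E (w i) (p i) := fun i => by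
    by_cases h : (i : ℕ) < k
    · simpa [w, h] using hy ⟨i, h⟩
    · simpa [w, h] using hperp.refl (p i)
  obtain ⟨h, hh_false, hh_perp, hh_edge⟩ := hS.exists_doubled_columns_with_prescribed_edges
    (fun i j hij hwij => hp i j hij <|
      hperp.trans (hperp.symm (hwp i)) (hperp.trans hwij (hwp j))) ε
  let v : Fin n → Fin n × Bool := fun j => (j, decide (k ≤ (j : ℕ)))
  refine ⟨h ∘ v, fun i => ?_, fun j => ?_, fun i j hij hkj => ?_⟩
  · simpa [v, w, not_le.2 i.is_lt] using hh_false (Fin.castLE hkn.le i)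
  · exact hperp.trans ((hh_perp (v j) (j, false)).2 rfl) (hh_false j ▸ hwp j)
  · simpa [v, hkj] using hh_edge (v i) j hij
end

section
/- Let K be a group acting on a countably infinite set N with no finite orbits. Then the uniform measure λ on LO(N) is K-ergodic: for every Borel set A ⊆ LO(N) such that λ(A △ g·A)=0 for every g∈K, one has λ(A)∈{0,1}. -/
/-!
Approximate `A` by a measurable set `B` determined by the restriction of the ordering to a
finite set `F`. By Neumann's lemma on coverings of a group by cosets, some `g ∈ K` moves `F` off
itself, so `B` and `g • B` are determined by disjoint finite sets. Such events are independent
under `λ`: conditionally on any event determined by one set, every ordering of the other is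
equally likely, because `λ` is invariant under permutations of `N` (it is the unique uniform
measure). Hence `λ A ≈ λ (A ∩ g • A) ≈ λ (B ∩ g • B) = (λ B)² ≈ (λ A)²`, so `λ A = (λ A)²`.
-/

open MeasureTheory ENNReal

/-- `r` codes a (strict) linear ordering of `N`. -/
def IsLinOrder {N : Type*} (r : N → N → Bool) : Prop :=
  (∀ a, r a a = false) ∧
  (∀ a b c, r a b = true → r b c = true → r a c = true) ∧
  (∀ a b, a ≠ b → r a b = true ∨ r b a = true)

/-- `LO N`: the space of linear orderings of `N`, as a subspace of `{0,1}^{N×N}`. -/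
def LO (N : Type*) : Set (N → N → Bool) := {r | IsLinOrder r}

/-- The event that `a 0 < a 1 < ⋯ < a (n-1)`. -/
def ChainSet {N : Type*} (n : ℕ) (a : Fin n → N) : Set (N → N → Bool) :=
  {r | ∀ i j : Fin n, i < j → r (a i) (a j) = true}

/-- `lam` is the uniform measure on `LO N`: the Borel probability measure concentrated
on `LO N` giving each event `a 0 < ⋯ < a (n-1)` (for distinct `a i`) measure `1/n!`. -/
def IsUniformLO {N : Type*} (lam : Measure (N → N → Bool)) : Prop :=
  IsProbabilityMeasure lam ∧ lam (LO N) = 1 ∧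
  ∀ (n : ℕ) (a : Fin n → N), Function.Injective a →
    lam (ChainSet n a) = ((n.factorial : ℝ≥0∞))⁻¹

open scoped symmDiff Pointwise

section PermRel

variable {N : Type*}

def permRel (π : Equiv.Perm N) (r : N → N → Bool) : N → N → Bool :=
  fun a b => r (π.symm a) (π.symm b)

lemma measurable_permRel (π : Equiv.Perm N) : Measurable (permRel π) := by
  unfold permRel
  fun_prop

lemma permRel_symm_permRel (π : Equiv.Perm N) (r : N → N → Bool) :
    permRel π.symm (permRel π r) = r := by
  funext a b
  simp [permRel]

lemma image_permRel (π : Equiv.Perm N) (s : Set (N → N → Bool)) :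
    permRel π '' s = permRel π.symm ⁻¹' s :=
  congrFun (Set.image_eq_preimage_of_inverse (permRel_symm_permRel π)
    fun r => by simpa using permRel_symm_permRel π.symm r) s

lemma preimage_permRel_chainSet (π : Equiv.Perm N) (n : ℕ) (a : Fin n → N) :
    permRel π ⁻¹' ChainSet n a = ChainSet n (π.symm ∘ a) :=
  rfl

lemma preimage_permRel_LO (π : Equiv.Perm N) : permRel π ⁻¹' LO N = LO N := by
  suffices h : ∀ π : Equiv.Perm N, LO N ⊆ permRel π ⁻¹' LO N by
    refine (h π).antisymm' fun r hr => ?_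
    simpa [permRel_symm_permRel] using h π.symm hr
  rintro π r ⟨hirrefl, htrans, htotal⟩
  exact ⟨fun a => hirrefl _, fun a b c => htrans _ _ _,
    fun a b hab => htotal _ _ (π.symm.injective.ne hab)⟩

end PermRel

section Chains

variable {N : Type*} {r : N → N → Bool} {n : ℕ} {a : Fin n → N}

lemma measurableSet_chainSet (n : ℕ) (a : Fin n → N) : MeasurableSet (ChainSet n a) := by
  simp only [ChainSet]
  measurability

lemma measurableSet_LO [Countable N] : MeasurableSet (LO N) := by
  simp only [LO, IsLinOrder]
  measurability

lemma IsLinOrder.eq_false_of_eq_true (hr : IsLinOrder r) {x y : N} (hxy : r x y = true) :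
    r y x = false := by
  by_contra hyx
  simpa [hr.1 x] using hr.2.1 x y x hxy (by simpa using hyx)

lemma eq_true_iff_lt_of_mem_chainSet (hr : r ∈ LO N) (h : r ∈ ChainSet n a) (i j : Fin n) :
    r (a i) (a j) = true ↔ i < j := by
  refine ⟨fun hij => ?_, h i j⟩
  by_contra! hji
  rcases hji.lt_or_eq with hji | rfl
  · simp [IsLinOrder.eq_false_of_eq_true hr (h j i hji)] at hij
  · simp [hr.1] at hij

lemma exists_perm_mem_chainSet (hr : r ∈ LO N) (ha : Function.Injective a) :
    ∃ σ : Equiv.Perm (Fin n), r ∈ ChainSet n (a ∘ σ) := by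
  classical
  -- sort the indices by the number of their `r`-predecessors
  let rank : Fin n → ℕ := fun i => (Finset.univ.filter fun j => r (a j) (a i)).card
  have rank_lt : ∀ i j, r (a i) (a j) = true → rank i < rank j := fun i j hij =>
    Finset.card_lt_card <| Finset.ssubset_iff_of_subset
      (fun k hk => by simp only [Finset.mem_filter] at hk ⊢; exact ⟨hk.1, hr.2.1 _ _ _ hk.2 hij⟩)
      |>.mpr ⟨i, by simpa using hij, by simp [hr.1]⟩
  have rank_inj : Function.Injective rank := fun i j hij => by
    by_contra hne
    rcases hr.2.2 _ _ (ha.ne hne) with h | h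
    · exact (rank_lt i j h).ne hij
    · exact (rank_lt j i h).ne hij.symm
  let σ := Tuple.sort rank
  have hmono : StrictMono (rank ∘ σ) :=
    (Tuple.monotone_sort rank).strictMono_of_injective (rank_inj.comp σ.injective)
  refine ⟨σ, fun i j hij => ?_⟩
  rcases hr.2.2 _ _ (ha.ne (σ.injective.ne hij.ne)) with h | h
  · exact h
  · exact absurd (hmono hij) (rank_lt _ _ h).asymm

lemma perm_eq_of_mem_chainSet (hr : r ∈ LO N) {σ τ : Equiv.Perm (Fin n)}
    (hσ : r ∈ ChainSet n (a ∘ σ)) (hτ : r ∈ ChainSet n (a ∘ τ)) : σ = τ := by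
  let ρ := σ.trans τ.symm
  have hρ : StrictMono ρ := fun i j hij => by
    rw [← eq_true_iff_lt_of_mem_chainSet hr hτ]
    simpa [ρ] using hσ i j hij
  refine Equiv.ext fun i => ?_
  have hρi : ρ i = i :=
    DFunLike.congr_fun (Subsingleton.elim (hρ.orderIsoOfSurjective ρ ρ.surjective) (.refl _)) i
  simpa [ρ] using congrArg τ hρi

end Chains

section Determined

variable {N : Type*}

def IsDeterminedBy (F : Set N) (B : Set (N → N → Bool)) : Prop :=
  ∀ r r' : N → N → Bool, (∀ x ∈ F, ∀ y ∈ F, r x y = r' x y) → r ∈ B → r' ∈ B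

variable {F : Set N} {B : Set (N → N → Bool)}

lemma IsDeterminedBy.mem_iff (hB : IsDeterminedBy F B) {r r' : N → N → Bool}
    (h : ∀ x ∈ F, ∀ y ∈ F, r x y = r' x y) : r ∈ B ↔ r' ∈ B :=
  ⟨hB r r' h, hB r' r fun x hx y hy => (h x hx y hy).symm⟩

lemma IsDeterminedBy.preimage_permRel (hB : IsDeterminedBy F B) (π : Equiv.Perm N) :
    IsDeterminedBy (π ⁻¹' F) (permRel π ⁻¹' B) := fun r r' h =>
  hB _ _ fun x hx y hy => h _ (by simpa using hx) _ (by simpa using hy)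

lemma IsDeterminedBy.preimage_permRel_eq (hB : IsDeterminedBy F B) {π : Equiv.Perm N}
    (hπ : ∀ x ∈ F, π x = x) : permRel π ⁻¹' B = B := by
  have hπ' : ∀ x ∈ F, π.symm x = x := fun x hx => π.symm_apply_eq.mpr (hπ x hx).symm
  ext r
  exact hB.mem_iff fun x hx y hy => by simp [permRel, hπ' x hx, hπ' y hy]

lemma IsDeterminedBy.disjoint_or_subset_of_chainSet {n : ℕ} {a : Fin n → N}
    (hB : IsDeterminedBy (Set.range a) B) :
    Disjoint (ChainSet n a ∩ LO N) B ∨ ChainSet n a ∩ LO N ⊆ B := by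
  refine or_iff_not_imp_left.mpr fun hmeet => ?_
  obtain ⟨r, ⟨hr, hrLO⟩, hrB⟩ := Set.not_disjoint_iff.mp hmeet
  rintro r' ⟨hr', hr'LO⟩
  refine hB r r' ?_ hrB
  rintro _ ⟨i, rfl⟩ _ ⟨j, rfl⟩
  rw [Bool.eq_iff_iff, eq_true_iff_lt_of_mem_chainSet hrLO hr,
    eq_true_iff_lt_of_mem_chainSet hr'LO hr']

def cylinders (N : Type*) : Set (Set (N → N → Bool)) :=
  {B | MeasurableSet B ∧ ∃ F : Finset N, IsDeterminedBy F B}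

lemma isSetAlgebra_cylinders : IsSetAlgebra (cylinders N) where
  empty_mem := ⟨.empty, ∅, fun _ _ _ h => h⟩
  compl_mem := by
    rintro B ⟨hBm, F, hB⟩
    exact ⟨hBm.compl, F, fun r r' h => mt (hB r' r fun x hx y hy => (h x hx y hy).symm)⟩
  union_mem := by
    classical
    rintro B C ⟨hBm, F, hB⟩ ⟨hCm, G, hC⟩
    refine ⟨hBm.union hCm, F ∪ G, fun r r' h => Or.imp (hB r r' ?_) (hC r r' ?_)⟩ <;>
      exact fun x hx y hy => h x (by simp [hx]) y (by simp [hy])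

lemma generateFrom_cylinders :
    (MeasurableSpace.pi : MeasurableSpace (N → N → Bool)) =
      MeasurableSpace.generateFrom (cylinders N) := by
  classical
  refine le_antisymm ?_ (MeasurableSpace.generateFrom_le fun B hB => hB.1)
  have hcoord : ∀ a b : N,
      Measurable[MeasurableSpace.generateFrom (cylinders N)] fun r : N → N → Bool => r a b := by
    intro a b
    refine measurable_to_bool (MeasurableSpace.measurableSet_generateFrom
      ⟨(measurable_pi_apply b).comp (measurable_pi_apply a) (measurableSet_singleton true),
        {a, b}, fun r r' h hr => ?_⟩)
    simpa [h a (by simp) b (by simp)] using hr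
  have hid : Measurable[MeasurableSpace.generateFrom (cylinders N)] (id : (N → N → Bool) → _) :=
    @measurable_pi_lambda _ _ _ (_) _ _ fun a => @measurable_pi_lambda _ _ _ (_) _ _ (hcoord a)
  exact fun s hs => hid hs

lemma Finset.exists_injective_range_eq {N : Type*} (F : Finset N) :
    ∃ a : Fin F.card → N, Function.Injective a ∧ Set.range a = F :=
  ⟨fun i => F.equivFin.symm i, Subtype.val_injective.comp F.equivFin.symm.injective, by
    ext x
    exact ⟨fun ⟨i, hi⟩ => hi ▸ (F.equivFin.symm i).2, fun hx => ⟨F.equivFin ⟨x, hx⟩, by simp⟩⟩⟩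

end Determined

namespace IsUniformLO

variable {N : Type*} [Countable N] {μ ν : Measure (N → N → Bool)} {n : ℕ} {a : Fin n → N}
  {B C X s t : Set (N → N → Bool)} {G : Set N}

lemma ae_mem_LO (hμ : IsUniformLO μ) : ∀ᵐ r ∂μ, r ∈ LO N := by
  have := hμ.1
  simpa using measure_eq_zero_iff_ae_notMem.mp <|
    (prob_compl_eq_zero_iff measurableSet_LO).mpr hμ.2.1

lemma ae_eq_of_forall_mem_LO (hμ : IsUniformLO μ) (h : ∀ r ∈ LO N, r ∈ s ↔ r ∈ t) :
    s =ᵐ[μ] t :=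
  Filter.eventuallyEq_set.mpr <| hμ.ae_mem_LO.mono h

lemma measure_eq_sum_chainSet (hμ : IsUniformLO μ) (ha : Function.Injective a)
    (hX : MeasurableSet X) :
    μ X = ∑ σ : Equiv.Perm (Fin n), μ (X ∩ ChainSet n (a ∘ σ)) := by
  have hcover : X =ᵐ[μ] ⋃ σ ∈ (Finset.univ : Finset (Equiv.Perm (Fin n))),
      X ∩ ChainSet n (a ∘ σ) :=
    hμ.ae_eq_of_forall_mem_LO fun r hr => by
      simpa using fun _ => exists_perm_mem_chainSet hr ha
  rw [measure_congr hcover, measure_biUnion_finset₀ ?_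
    fun σ _ => (hX.inter (measurableSet_chainSet _ _)).nullMeasurableSet]
  intro σ _ τ _ hστ
  refine measure_congr (hμ.ae_eq_of_forall_mem_LO (t := ∅) fun r hr => ?_) |>.trans measure_empty
  simpa using fun _ hσ _ hτ => hστ (perm_eq_of_mem_chainSet hr hσ hτ)

lemma inter_chainSet_ae_eq_empty (hμ : IsUniformLO μ) (h : Disjoint (ChainSet n a ∩ LO N) B) :
    (B ∩ ChainSet n a : Set (N → N → Bool)) =ᵐ[μ] (∅ : Set _) :=
  hμ.ae_eq_of_forall_mem_LO fun r hr => by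
    simpa using fun hrB hra => Set.disjoint_left.mp h ⟨hra, hr⟩ hrB

lemma inter_chainSet_ae_eq_self (hμ : IsUniformLO μ) (h : ChainSet n a ∩ LO N ⊆ B) :
    (B ∩ ChainSet n a : Set (N → N → Bool)) =ᵐ[μ] ChainSet n a :=
  hμ.ae_eq_of_forall_mem_LO fun r hr => by simpa using fun hra => h ⟨hra, hr⟩

lemma measure_inter_chainSet_congr (hμ : IsUniformLO μ) (hν : IsUniformLO ν)
    (ha : Function.Injective a) (hB : IsDeterminedBy (Set.range a) B) :
    μ (B ∩ ChainSet n a) = ν (B ∩ ChainSet n a) := by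
  rcases hB.disjoint_or_subset_of_chainSet with h | h
  · rw [measure_congr (hμ.inter_chainSet_ae_eq_empty h),
      measure_congr (hν.inter_chainSet_ae_eq_empty h), measure_empty, measure_empty]
  · rw [measure_congr (hμ.inter_chainSet_ae_eq_self h),
      measure_congr (hν.inter_chainSet_ae_eq_self h), hμ.2.2 n a ha, hν.2.2 n a ha]

lemma unique (hμ : IsUniformLO μ) (hν : IsUniformLO ν) : μ = ν := by
  have := hμ.1
  refine ext_of_generate_finite _ generateFrom_cylinders
    isSetAlgebra_cylinders.isSetRing.isSetSemiring.isPiSystem ?_ (by simp [hν.1.measure_univ])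
  rintro B ⟨hBm, F, hB⟩
  obtain ⟨a, ha, hrange⟩ := F.exists_injective_range_eq
  rw [hμ.measure_eq_sum_chainSet ha hBm, hν.measure_eq_sum_chainSet ha hBm]
  refine Finset.sum_congr rfl fun σ _ => hμ.measure_inter_chainSet_congr hν (ha.comp σ.injective) ?_
  rwa [EquivLike.range_comp, hrange]

lemma map_permRel (hμ : IsUniformLO μ) (π : Equiv.Perm N) : IsUniformLO (μ.map (permRel π)) := by
  have := hμ.1
  refine ⟨Measure.isProbabilityMeasure_map (measurable_permRel π).aemeasurable, ?_,
    fun m b hb => ?_⟩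
  · rw [Measure.map_apply (measurable_permRel π) measurableSet_LO, preimage_permRel_LO, hμ.2.1]
  · rw [Measure.map_apply (measurable_permRel π) (measurableSet_chainSet m b),
      preimage_permRel_chainSet, hμ.2.2 m _ (π.symm.injective.comp hb)]

lemma measurePreserving_permRel (hμ : IsUniformLO μ) (π : Equiv.Perm N) :
    MeasurePreserving (permRel π) μ μ :=
  ⟨measurable_permRel π, (hμ.map_permRel π).unique hμ⟩

lemma measure_inter_chainSet_comp_perm (hμ : IsUniformLO μ) (ha : Function.Injective a)
    (hCm : MeasurableSet C) (hC : IsDeterminedBy G C) (hdisj : Disjoint (Set.range a) G)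
    (σ : Equiv.Perm (Fin n)) :
    μ (C ∩ ChainSet n (a ∘ σ)) = μ (C ∩ ChainSet n a) := by
  classical
  let π : Equiv.Perm N := Equiv.Perm.extendDomain σ.symm (Equiv.ofInjective a ha)
  have hπa : π.symm ∘ a = a ∘ σ := funext fun i => by
    rw [Function.comp_apply, Equiv.symm_apply_eq]
    simpa using (Equiv.Perm.extendDomain_apply_image σ.symm (Equiv.ofInjective a ha) (σ i)).symm
  have hπG : ∀ x ∈ G, π x = x := fun x hx =>
    Equiv.Perm.extendDomain_apply_not_subtype σ.symm _ (Set.disjoint_right.mp hdisj hx)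
  rw [← (hμ.measurePreserving_permRel π).measure_preimage
    (hCm.inter (measurableSet_chainSet n a)).nullMeasurableSet, Set.preimage_inter,
    hC.preimage_permRel_eq hπG, preimage_permRel_chainSet, hπa]

lemma measure_inter_chainSet_eq_mul (hμ : IsUniformLO μ) (ha : Function.Injective a)
    (hCm : MeasurableSet C) (hC : IsDeterminedBy G C) (hdisj : Disjoint (Set.range a) G) :
    μ (C ∩ ChainSet n a) = μ (ChainSet n a) * μ C := by
  have hsum := hμ.measure_eq_sum_chainSet ha hCm
  simp_rw [hμ.measure_inter_chainSet_comp_perm ha hCm hC hdisj, Finset.sum_const,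
    Finset.card_univ, Fintype.card_perm, Fintype.card_fin, nsmul_eq_mul] at hsum
  rw [hsum, hμ.2.2 n a ha, ENNReal.inv_mul_cancel_left (by simp [Nat.factorial_ne_zero]) (by simp)]

lemma measure_inter_eq_mul (hμ : IsUniformLO μ) (hBm : MeasurableSet B) (hCm : MeasurableSet C)
    {F : Finset N} (hB : IsDeterminedBy F B) (hC : IsDeterminedBy G C) (hFG : Disjoint ↑F G) :
    μ (B ∩ C) = μ B * μ C := by
  obtain ⟨a, ha, hrange⟩ := F.exists_injective_range_eq
  have hterm : ∀ σ : Equiv.Perm (Fin F.card),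
      μ (B ∩ ChainSet _ (a ∘ σ) ∩ C) = μ (B ∩ ChainSet _ (a ∘ σ)) * μ C := by
    intro σ
    have hrangeσ : Set.range (a ∘ σ) = F := by rw [EquivLike.range_comp, hrange]
    rcases (hrangeσ ▸ hB).disjoint_or_subset_of_chainSet with h | h
    · rw [measure_congr ((hμ.inter_chainSet_ae_eq_empty h).inter (ae_eq_refl C)),
        measure_congr (hμ.inter_chainSet_ae_eq_empty h), Set.empty_inter, measure_empty,
        zero_mul]
    · rw [measure_congr ((hμ.inter_chainSet_ae_eq_self h).inter (ae_eq_refl C)),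
        measure_congr (hμ.inter_chainSet_ae_eq_self h), Set.inter_comm,
        hμ.measure_inter_chainSet_eq_mul (ha.comp σ.injective) hCm hC (hrangeσ ▸ hFG)]
  rw [hμ.measure_eq_sum_chainSet ha (hBm.inter hCm), hμ.measure_eq_sum_chainSet ha hBm,
    Finset.sum_mul]
  exact Finset.sum_congr rfl fun σ _ => by rw [Set.inter_right_comm]; exact hterm σ

end IsUniformLO

lemma Set.inter_symmDiff_inter_subset_union {α : Type*} (s t u v : Set α) :
    (s ∩ t) ∆ (u ∩ v) ⊆ s ∆ u ∪ t ∆ v := by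
  intro x
  simp only [Set.mem_symmDiff, Set.mem_inter_iff, Set.mem_union]
  tauto

section Mixing

variable {α : Type*} [MeasurableSpace α] {μ : Measure α} [IsProbabilityMeasure μ]
  {A B : Set α} {T : α → α}

lemma abs_measureReal_sub_sq_le (hA : MeasurableSet A) (hB : MeasurableSet B)
    (hT : MeasurePreserving T μ μ) (hAT : μ (A ∆ (T ⁻¹' A)) = 0)
    (hBT : μ (B ∩ T ⁻¹' B) = μ B * μ B) :
    |μ.real A - μ.real A ^ 2| ≤ 4 * μ.real (A ∆ B) := by
  have hTA : μ.real (A ∩ T ⁻¹' A) = μ.real A := by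
    refine measureReal_congr ?_
    simpa using (ae_eq_refl A).inter (measure_symmDiff_eq_zero_iff.mp hAT).symm
  have hTB : μ.real (B ∩ T ⁻¹' B) = μ.real B ^ 2 := by
    rw [Measure.real, hBT, ENNReal.toReal_mul, sq, Measure.real]
  have hinter : |μ.real A - μ.real B ^ 2| ≤ 2 * μ.real (A ∆ B) := by
    rw [← hTA, ← hTB]
    calc _ ≤ μ.real ((A ∩ T ⁻¹' A) ∆ (B ∩ T ⁻¹' B)) :=
          abs_measureReal_sub_le_measureReal_symmDiff
            (hA.inter (hT.measurable hA)).nullMeasurableSet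
            (hB.inter (hT.measurable hB)).nullMeasurableSet
      _ ≤ μ.real (A ∆ B ∪ T ⁻¹' (A ∆ B)) :=
          measureReal_mono (Set.inter_symmDiff_inter_subset_union _ _ _ _)
      _ ≤ μ.real (A ∆ B) + μ.real (T ⁻¹' (A ∆ B)) := measureReal_union_le _ _
      _ = 2 * μ.real (A ∆ B) := by
          rw [hT.measureReal_preimage (hA.symmDiff hB).nullMeasurableSet]
          ring
  have hAB : |μ.real A - μ.real B| ≤ μ.real (A ∆ B) :=
    abs_measureReal_sub_le_measureReal_symmDiff hA.nullMeasurableSet hB.nullMeasurableSet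
  -- `x ↦ x ^ 2` is `2`-Lipschitz on `[0, 1]`
  have hsq : |μ.real B ^ 2 - μ.real A ^ 2| ≤ 2 * μ.real (A ∆ B) := by
    have hsum : |μ.real B + μ.real A| ≤ 2 := by
      rw [abs_of_nonneg (by positivity)]
      linarith [measureReal_le_one (μ := μ) (s := A), measureReal_le_one (μ := μ) (s := B)]
    rw [sq_sub_sq, abs_mul, abs_sub_comm]
    nlinarith [abs_nonneg (μ.real A - μ.real B), abs_nonneg (μ.real B + μ.real A)]
  calc |μ.real A - μ.real A ^ 2|
      ≤ |μ.real A - μ.real B ^ 2| + |μ.real B ^ 2 - μ.real A ^ 2| := abs_sub_le _ _ _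
    _ ≤ 4 * μ.real (A ∆ B) := by linarith

theorem measure_eq_zero_or_one_of_forall_approx_mixing (hA : MeasurableSet A)
    (h : ∀ ε : ℝ, 0 < ε → ∃ (B : Set α) (T : α → α), MeasurableSet B ∧
      μ (A ∆ B) < ENNReal.ofReal ε ∧ MeasurePreserving T μ μ ∧ μ (A ∆ (T ⁻¹' A)) = 0 ∧
      μ (B ∩ T ⁻¹' B) = μ B * μ B) :
    μ A = 0 ∨ μ A = 1 := by
  have hidem : IsIdempotentElem (μ.real A) := by
    refine (eq_of_forall_dist_le fun ε hε => ?_).symm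
    obtain ⟨B, T, hB, hAB, hT, hAT, hBT⟩ := h (ε / 4) (by positivity)
    have := abs_measureReal_sub_sq_le hA hB hT hAT hBT
    have hABε : μ.real (A ∆ B) < ε / 4 := ENNReal.toReal_lt_of_lt_ofReal hAB
    rw [Real.dist_eq, ← sq]
    linarith
  rcases IsIdempotentElem.iff_eq_zero_or_one.mp hidem with h0 | h1
  · exact Or.inl ((measureReal_eq_zero_iff).mp h0)
  · exact Or.inr ((ENNReal.toReal_eq_one_iff _).mp h1)

end Mixing

theorem MulAction.exists_smul_disjoint_of_orbit_infinite {G X : Type*} [Group G] [MulAction G X]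
    (horb : ∀ x : X, (MulAction.orbit G x).Infinite) (F : Finset X) :
    ∃ g : G, Disjoint (g • (F : Set X)) F := by
  classical
  by_contra! hmeet
  -- `{g | g • a = b}` is empty or a left coset of `stabilizer G a`, so these finitely many
  -- cosets cover `G`; by Neumann's lemma one stabilizer has finite index.
  let transporter : X × X → G := fun p =>
    if h : ∃ g : G, g • p.1 = p.2 then h.choose else 1
  have hcover : ⋃ p ∈ F ×ˢ F, transporter p • (stabilizer G p.1 : Set G) = Set.univ := by
    refine Set.eq_univ_of_forall fun g => ?_
    obtain ⟨b, ⟨a, ha, rfl⟩, hb⟩ := Set.not_disjoint_iff.mp (hmeet g)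
    have hex : ∃ k : G, k • a = g • a := ⟨g, rfl⟩
    have htr : transporter (a, g • a) • a = g • a := by
      simp only [transporter, dif_pos hex]
      exact hex.choose_spec
    refine Set.mem_biUnion (x := (a, g • a)) (Finset.mem_product.mpr ⟨ha, hb⟩) ?_
    rw [Set.mem_smul_set_iff_inv_smul_mem, SetLike.mem_coe, mem_stabilizer_iff, smul_eq_mul,
      mul_smul]
    exact inv_smul_eq_iff.mpr htr.symm
  obtain ⟨p, -, hfin⟩ := Subgroup.exists_finiteIndex_of_leftCoset_cover hcover
  refine horb p.1 (Set.finite_of_ncard_ne_zero ?_)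
  rw [← index_stabilizer]
  exact hfin.index_ne_zero

theorem uniformLO_ergodic_general {N : Type*} [Countable N]
    (K : Type*) [Group K] [MulAction K N]
    (horb : ∀ a : N, (MulAction.orbit K a).Infinite)
    (lam : Measure (N → N → Bool)) (hlam : IsUniformLO lam)
    (A : Set (N → N → Bool)) (hA : MeasurableSet A)
    (hinv : ∀ g : K,
      lam (symmDiff A ((fun r : N → N → Bool => fun a b => r (g⁻¹ • a) (g⁻¹ • b)) '' A)) = 0) :
    lam A = 0 ∨ lam A = 1 := by
  have := hlam.1
  refine measure_eq_zero_or_one_of_forall_approx_mixing hA fun ε hε => ?_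
  obtain ⟨B, ⟨hBm, F, hB⟩, hAB⟩ := (Measure.MeasureDense.of_generateFrom_isSetAlgebra_finite lam
    isSetAlgebra_cylinders generateFrom_cylinders).approx A hA (measure_ne_top _ _) ε hε
  obtain ⟨g, hg⟩ := MulAction.exists_smul_disjoint_of_orbit_infinite horb F
  let π : Equiv.Perm N := (MulAction.toPerm g).symm
  have hπF : π ⁻¹' F = g • (F : Set N) := Set.preimage_smul_inv g (F : Set N)
  have hgA : permRel (MulAction.toPerm g) '' A = permRel π ⁻¹' A := image_permRel _ A
  refine ⟨B, permRel π, hBm, hAB, hlam.measurePreserving_permRel π, hgA ▸ hinv g, ?_⟩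
  rw [hlam.measure_inter_eq_mul hBm (measurable_permRel π hBm) hB (hB.preimage_permRel π)
    (hπF ▸ hg.symm), (hlam.measurePreserving_permRel π).measure_preimage hBm.nullMeasurableSet]

/-- if a group `K` acts on a countably infinite set `N` with no finite
orbits, then the uniform measure on `LO N` is `K`-ergodic: any Borel set `A ⊆ LO N`
that is almost invariant under the induced action `(g · r)(a, b) = r (g⁻¹ a, g⁻¹ b)`
has measure `0` or `1`. -/
theorem uniformLO_ergodic {N : Type*} [Countable N] [Infinite N]
    (K : Type*) [Group K] [MulAction K N]
    (horb : ∀ a : N, (MulAction.orbit K a).Infinite)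
    (lam : Measure (N → N → Bool)) (hlam : IsUniformLO lam)
    (A : Set (N → N → Bool)) (hA : MeasurableSet A) (hALO : A ⊆ LO N)
    (hinv : ∀ g : K,
      lam (symmDiff A ((fun r : N → N → Bool => fun a b => r (g⁻¹ • a) (g⁻¹ • b)) '' A)) = 0) :
    lam A = 0 ∨ lam A = 1 :=
  uniformLO_ergodic_general K horb lam hlam A hA hinv
end

section
/- Let V be a directed graph in which ⊥ is an equivalence relation. Then V satisfies the parity condition if and only if for any two distinct columns P,Q and all x,x'∈P, either (for all y∈Q, x→y ↔ x'→y) or (for all y∈Q, x→y ↔ y→x'). -/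
/-- Between two non-perpendicular vertices there is exactly one edge. -/
lemma excl {V : Type*} {E : V → V → Prop} (hD : IsDigraph E) {u v : V}
    (h : ¬ Perp E u v) : E u v ↔ ¬ E v u := by
  unfold Perp at h
  constructor
  · exact hD.2 u v
  · intro hn
    by_contra hc
    exact h ⟨hc, hn⟩

/-- the parity condition is equivalent to the column dichotomy:
for any two distinct columns `P` (the column of `x, x'`) and `Q` (the column of `q`),
either `x` and `x'` have the same out-edges towards `Q`, or the edges of `x'` towards `Q`
are exactly the reversed edges of `x`. -/
theorem parity_iff_column_dichotomy {V : Type*} (E : V → V → Prop)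
    (hD : IsDigraph E) (hEq : Equivalence (Perp E)) :
    ParityCond E ↔
      ∀ x x' q : V, Perp E x x' → ¬ Perp E x q →
        ((∀ y, Perp E y q → (E x y ↔ E x' y)) ∨
         (∀ y, Perp E y q → (E x y ↔ E y x'))) := by
  constructor
  · intro hP x x' q hxx' hxq
    by_cases hxx : x = x'
    · left; intro y _; rw [hxx]
    by_contra h
    have h' : (∃ y, Perp E y q ∧ ¬ (E x y ↔ E x' y)) ∧
        (∃ y, Perp E y q ∧ ¬ (E x y ↔ E y x')) := by
      constructor
      · by_contra h1
        push_neg at h1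
        exact h (Or.inl fun y hy => (h1 y hy))
      · by_contra h2
        push_neg at h2
        exact h (Or.inr fun y hy => (h2 y hy))
    obtain ⟨⟨y1, hy1q, hy1⟩, ⟨y2, hy2q, hy2⟩⟩ := h'
    -- x' is not perp to y1, y2
    have hxy1 : ¬ Perp E x y1 := fun hp => hxq (hEq.trans hp hy1q)
    have hxy2 : ¬ Perp E x y2 := fun hp => hxq (hEq.trans hp hy2q)
    have hx'y1 : ¬ Perp E x' y1 := fun hp => hxq (hEq.trans (hEq.trans hxx' hp) hy1q)
    have hx'y2 : ¬ Perp E x' y2 := fun hp => hxq (hEq.trans (hEq.trans hxx' hp) hy2q)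
    -- rewrite hy2 : since exactly one of E x' y2, E y2 x'
    have e2 : E y2 x' ↔ ¬ E x' y2 := by
      have := excl hD hx'y2
      tauto
    have hy2' : E x y2 ↔ E x' y2 := by tauto
    have hne : y1 ≠ y2 := by
      intro he
      subst he
      tauto
    have hperp : Perp E y1 y2 := hEq.trans hy1q (hEq.symm hy2q)
    have hEven := hP x x' y1 y2 hxx hne hxx' hperp
    rcases Classical.em (E x y1) with a | a <;>
      rcases Classical.em (E x' y1) with b | b <;>
        rcases Classical.em (E x y2) with c | c <;>
          rcases Classical.em (E x' y2) with d | d <;>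
            simp_all [Nat.even_iff]
  · intro h x1 x2 y1 y2 hx12 hy12 hpx hpy
    by_cases hq : Perp E x1 y1
    · have p12 : Perp E x1 y2 := hEq.trans hq hpy
      have p21 : Perp E x2 y1 := hEq.trans (hEq.symm hpx) hq
      have p22 : Perp E x2 y2 := hEq.trans p21 hpy
      simp [hq.1, p12.1, p21.1, p22.1]
    · obtain hl | hr := h x1 x2 y1 hpx hq
      · have e1 := hl y1 (hEq.refl y1)
        have e2 := hl y2 (hEq.symm hpy)
        rcases Classical.em (E x1 y1) with a | a <;>
          rcases Classical.em (E x1 y2) with c | c <;>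
            simp_all [Nat.even_iff]
      · have h21 : ¬ Perp E x2 y1 := fun hp => hq (hEq.trans hpx hp)
        have h22 : ¬ Perp E x2 y2 := fun hp =>
          hq (hEq.trans (hEq.trans hpx hp) (hEq.symm hpy))
        have e1 : E x1 y1 ↔ ¬ E x2 y1 := by
          have := hr y1 (hEq.refl y1)
          have := excl hD h21
          tauto
        have e2 : E x1 y2 ↔ ¬ E x2 y2 := by
          have := hr y2 (hEq.symm hpy)
          have := excl hD h22
          tauto
        rcases Classical.em (E x1 y1) with a | a <;>
          rcases Classical.em (E x1 y2) with c | c <;>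
            simp_all [Nat.even_iff]
end

section
/- Let V be a directed graph in which ⊥ is an equivalence relation and which satisfies the parity condition. Let P and Q be distinct columns, let x,x'∈P, and suppose there exists y∈Q with x→y and x'→y. Then for every z∈Q, x→z if and only if x'→z. -/
/-- if `x, x'` lie in a common column `P`, `y` lies in a different column `Q`,
and `x → y` and `x' → y` for some `y ∈ Q`, then `x` and `x'` have the same out-edges
towards every `z ∈ Q`. -/
theorem same_out_edges_of_common_target {V : Type*} (E : V → V → Prop)
    (hD : IsDigraph E) (hEq : Equivalence (Perp E)) (hPar : ParityCond E)
    (x x' y : V) (hxx' : Perp E x x') (hPQ : ¬ Perp E x y)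
    (hx : E x y) (hx' : E x' y) :
    ∀ z, Perp E z y → (E x z ↔ E x' z) := by
  intro z hzy
  by_cases hxx : x = x'
  · rw [hxx]
  by_cases hzy' : z = y
  · subst hzy'; simp [hx, hx']
  have := hPar x x' y z hxx (Ne.symm hzy') hxx' (hEq.symm hzy)
  simp only [hx, hx', if_true] at this
  by_cases h1 : E x z <;> by_cases h2 : E x' z <;> simp [h1, h2] at this ⊢ <;> exact absurd this (by decide)
end

section
/- Let V be a directed graph in which ⊥ is an equivalence relation and which satisfies the parity condition. For any two distinct columns P and Q, the relation ∼_Q on P defined by x∼_Q x' iff (for all y∈Q, x→y ↔ x'→y) is an equivalence relation on P with at most two equivalence classes. -/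
/-- `x ∼_Q x'` where `Q` is the column of `q`: `x` and `x'` have the same out-edges
towards every element of the column of `q`. -/
def SimCol {V : Type*} (E : V → V → Prop) (q : V) (x x' : V) : Prop :=
  ∀ y, Perp E y q → (E x y ↔ E x' y)

section

variable {V : Type*} {E : V → V → Prop}

theorem simCol_equivalence (q : V) : Equivalence (SimCol E q) where
  refl _ _ _ := Iff.rfl
  symm h y hy := (h y hy).symm
  trans h h' y hy := (h y hy).trans (h' y hy)

theorem ParityCond.agree_iff_agree (hPar : ParityCond E) {x x' y y' : V} (hx : x ≠ x')
    (hxx' : Perp E x x') (hy : y ≠ y') (hyy' : Perp E y y') :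
    ((E x y ↔ E x' y) ↔ (E x y' ↔ E x' y')) := by
  have h := hPar x x' y y' hx hy hxx' hyy'
  by_cases h1 : E x y <;> by_cases h2 : E x y' <;> by_cases h3 : E x' y <;>
    by_cases h4 : E x' y' <;> simp_all [Nat.even_iff]

theorem ParityCond.disagree_of_not_simCol (hPar : ParityCond E) (hEq : Equivalence (Perp E))
    {q x x' : V} (hxx' : Perp E x x') (hsim : ¬ SimCol E q x x') :
    ∀ y, Perp E y q → ¬ (E x y ↔ E x' y) := by
  intro y hy hagree
  apply hsim
  intro y' hy'
  have hx : x ≠ x' := by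
    rintro rfl
    exact hsim ((simCol_equivalence q).refl x)
  rcases eq_or_ne y y' with rfl | hne
  · exact hagree
  · exact (hPar.agree_iff_agree hx hxx' hne (hEq.trans hy (hEq.symm hy'))).mp hagree

end

theorem simCol_equivalence_two_classes_general {V : Type*} (E : V → V → Prop)
    (hEq : Equivalence (Perp E)) (hPar : ParityCond E)
    (p q : V) :
    (∀ x, Perp E x p → SimCol E q x x) ∧
    (∀ x x', Perp E x p → Perp E x' p → SimCol E q x x' → SimCol E q x' x) ∧
    (∀ x x' x'', Perp E x p → Perp E x' p → Perp E x'' p →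
      SimCol E q x x' → SimCol E q x' x'' → SimCol E q x x'') ∧
    (∀ x x' x'', Perp E x p → Perp E x' p → Perp E x'' p →
      SimCol E q x x' ∨ SimCol E q x x'' ∨ SimCol E q x' x'') := by
  have hequiv := simCol_equivalence (E := E) q
  refine ⟨fun x _ => hequiv.refl x, fun _ _ _ _ => hequiv.symm,
    fun _ _ _ _ _ _ => hequiv.trans, ?_⟩
  intro x x' x'' hx hx' hx''
  by_cases h' : SimCol E q x x'
  · exact Or.inl h'
  by_cases h'' : SimCol E q x x''
  · exact Or.inr (Or.inl h'')
  have d' := hPar.disagree_of_not_simCol hEq (hEq.trans hx (hEq.symm hx')) h'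
  have d'' := hPar.disagree_of_not_simCol hEq (hEq.trans hx (hEq.symm hx'')) h''
  refine Or.inr (Or.inr fun y hy => ?_)
  have := d' y hy
  have := d'' y hy
  tauto

/-- for distinct columns `P` (the column of `p`) and `Q` (the column of `q`),
the relation `∼_Q` is an equivalence relation on `P` with at most two equivalence classes
(among any three elements of `P`, two are `∼_Q`-equivalent). -/
theorem simCol_equivalence_two_classes {V : Type*} (E : V → V → Prop)
    (hD : IsDigraph E) (hEq : Equivalence (Perp E)) (hPar : ParityCond E)
    (p q : V) (hpq : ¬ Perp E p q) :
    (∀ x, Perp E x p → SimCol E q x x) ∧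
    (∀ x x', Perp E x p → Perp E x' p → SimCol E q x x' → SimCol E q x' x) ∧
    (∀ x x' x'', Perp E x p → Perp E x' p → Perp E x'' p →
      SimCol E q x x' → SimCol E q x' x'' → SimCol E q x x'') ∧
    (∀ x x' x'', Perp E x p → Perp E x' p → Perp E x'' p →
      SimCol E q x x' ∨ SimCol E q x x'' ∨ SimCol E q x' x'') :=
  simCol_equivalence_two_classes_general E hEq hPar p q
end

section
/- Let V be a directed graph in which ⊥ is an equivalence relation and which satisfies the parity condition. Define a directed graph V' on V×{1,2} by: (x,i)→'(y,j) iff (i=j and x→y) or (i=1 and j=2). Then in V' the relation ⊥' (defined from →' as ⊥ is from →) is an equivalence relation, and V' satisfies the parity condition. -/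
/-- the "doubling" construction. Given `V` with `⊥` an equivalence relation
and the parity condition, the digraph on `V × {1,2}` (here `V × Bool`, with `false` playing
the role of `1` and `true` that of `2`) given by `(x,i) →' (y,j)` iff (`i = j` and `x → y`)
or (`i = 1` and `j = 2`), is again a digraph in which `⊥'` is an equivalence relation and
the parity condition holds. -/
theorem double_inClassS {V : Type*} (E : V → V → Prop)
    (hD : IsDigraph E) (hEq : Equivalence (Perp E)) (hPar : ParityCond E) :
    IsDigraph (fun p q : V × Bool => (p.2 = q.2 ∧ E p.1 q.1) ∨ (p.2 = false ∧ q.2 = true)) ∧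
    Equivalence (Perp
      (fun p q : V × Bool => (p.2 = q.2 ∧ E p.1 q.1) ∨ (p.2 = false ∧ q.2 = true))) ∧
    ParityCond
      (fun p q : V × Bool => (p.2 = q.2 ∧ E p.1 q.1) ∨ (p.2 = false ∧ q.2 = true)) := by
  classical
  set E' : V × Bool → V × Bool → Prop :=
    fun p q => (p.2 = q.2 ∧ E p.1 q.1) ∨ (p.2 = false ∧ q.2 = true) with hE'
  have hperp : ∀ p q : V × Bool, Perp E' p q ↔ p.2 = q.2 ∧ Perp E p.1 q.1 := by
    rintro ⟨x, i⟩ ⟨y, j⟩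
    constructor
    · rintro ⟨h1, h2⟩
      rcases Bool.eq_false_or_eq_true i with hi | hi <;>
        rcases Bool.eq_false_or_eq_true j with hj | hj <;> subst hi <;> subst hj
      · exact ⟨rfl, fun h => h1 (Or.inl ⟨rfl, h⟩), fun h => h2 (Or.inl ⟨rfl, h⟩)⟩
      · exact absurd (Or.inr ⟨rfl, rfl⟩) h2
      · exact absurd (Or.inr ⟨rfl, rfl⟩) h1
      · exact ⟨rfl, fun h => h1 (Or.inl ⟨rfl, h⟩), fun h => h2 (Or.inl ⟨rfl, h⟩)⟩
    · rintro ⟨hij, h1, h2⟩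
      subst hij
      constructor
      · rintro (⟨-, h⟩ | ⟨h, h'⟩)
        · exact h1 h
        · simp only at h h'; simp [h] at h'
      · rintro (⟨-, h⟩ | ⟨h, h'⟩)
        · exact h2 h
        · simp only at h h'; simp [h] at h'
  refine ⟨⟨?_, ?_⟩, ⟨?_, ?_, ?_⟩, ?_⟩
  · rintro ⟨x, i⟩ (⟨-, h⟩ | ⟨h, h'⟩)
    · exact hD.1 x h
    · simp only at h h'; simp [h] at h'
  · rintro ⟨x, i⟩ ⟨y, j⟩ (⟨hij, h⟩ | ⟨hi, hj⟩) (⟨hji, h'⟩ | ⟨hj', hi'⟩)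
    · exact hD.2 x y h h'
    · simp only at hij hj' hi'; simp [hj', hi'] at hij
    · simp only at hji hi hj; simp [hi, hj] at hji
    · simp only at hi hi'; simp [hi] at hi'
  · rintro ⟨x, i⟩; exact (hperp _ _).mpr ⟨rfl, hEq.refl x⟩
  · intro p q h
    rcases (hperp _ _).mp h with ⟨hij, hp⟩
    exact (hperp _ _).mpr ⟨hij.symm, hEq.symm hp⟩
  · intro p q r h h'
    rcases (hperp _ _).mp h with ⟨hij, hp⟩
    rcases (hperp _ _).mp h' with ⟨hjk, hq⟩
    exact (hperp _ _).mpr ⟨hij.trans hjk, hEq.trans hp hq⟩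
  · rintro ⟨x1, i1⟩ ⟨x2, i2⟩ ⟨y1, j1⟩ ⟨y2, j2⟩ hx hy hpx hpy
    rcases (hperp _ _).mp hpx with ⟨hi, hx'⟩
    rcases (hperp _ _).mp hpy with ⟨hj, hy'⟩
    dsimp at hi hj
    subst hi; subst hj
    have hx1 : x1 ≠ x2 := fun h => hx (by simp [h])
    have hy1 : y1 ≠ y2 := fun h => hy (by simp [h])
    rcases Bool.eq_false_or_eq_true i1 with hi | hi <;>
      rcases Bool.eq_false_or_eq_true j1 with hj | hj <;> subst hi <;> subst hj
    · simpa [hE'] using hPar x1 x2 y1 y2 hx1 hy1 hx' hy'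
    · simp [hE']
    · simp [hE']; decide
    · simpa [hE'] using hPar x1 x2 y1 y2 hx1 hy1 hx' hy'
end

section
/- For every finite subset F of the semigeneric directed graph 𝕊 there exists an automorphism g of 𝕊 such that no element of g·F is ⊥-equivalent to any element of F, i.e. ¬(g(a) ⊥ b) for all a,b∈F (the columns meeting g·F are disjoint from the columns meeting F). -/
/-- for every finite subset `F` of the semigeneric digraph there is an
automorphism `g` such that no element of `g · F` is `⊥`-equivalent to an element of `F`. -/
theorem exists_aut_columns_disjoint {S : Type*} (E : S → S → Prop)
    (hS : IsSemigeneric S E) (F : Finset S) :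
    ∃ g : Equiv.Perm S, IsAut E g ∧ ∀ a ∈ F, ∀ b ∈ F, ¬ Perp E (g a) b := by
  classical
  obtain ⟨hirr, hasym⟩ := hS.inS.1
  have hequiv := hS.inS.2.1
  have hpar := hS.inS.2.2
  set n := F.card with hn
  set v : Fin n → S := fun i => ((F.equivFin.symm i : F) : S) with hv
  have hvinj : Function.Injective v := fun i j h =>
    F.equivFin.symm.injective (Subtype.ext h)
  have hvF : ∀ i, v i ∈ F := fun i => (F.equivFin.symm i).2
  have hvidx : ∀ a (ha : a ∈ F), v (F.equivFin ⟨a, ha⟩) = a := by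
    intro a ha
    simp [hv]
  -- the doubled structure
  set EA : Fin n × Bool → Fin n × Bool → Prop :=
    fun p q => (p.2 = q.2 ∧ E (v p.1) (v q.1)) ∨ (p.2 = false ∧ q.2 = true) with hEA
  have hEAiff : ∀ i j c, EA (i, c) (j, c) ↔ E (v i) (v j) := by
    intro i j c
    constructor
    · rintro (⟨-, h⟩ | ⟨h1, h2⟩)
      · exact h
      · simp_all
    · intro h; exact Or.inl ⟨rfl, h⟩
  have hEAcross : ∀ i j, EA (i, false) (j, true) := fun i j => Or.inr ⟨rfl, rfl⟩
  have hite : ∀ i j c, (@ite ℕ (EA (i, c) (j, c)) (Classical.propDecidable _) 1 0) =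
      @ite ℕ (E (v i) (v j)) (Classical.propDecidable _) 1 0 :=
    fun i j c => @if_congr ℕ _ _ (Classical.propDecidable _) (Classical.propDecidable _)
      1 0 1 0 (hEAiff i j c) rfl rfl
  have hPerpA : ∀ p q, Perp EA p q ↔ (p.2 = q.2 ∧ Perp E (v p.1) (v q.1)) := by
    rintro ⟨i, c⟩ ⟨j, d⟩
    constructor
    · rintro ⟨h1, h2⟩
      rcases c with _ | _ <;> rcases d with _ | _
      · exact ⟨rfl, ⟨(hEAiff i j false).not.mp h1, (hEAiff j i false).not.mp h2⟩⟩
      · exact absurd (hEAcross i j) h1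
      · exact absurd (hEAcross j i) h2
      · exact ⟨rfl, ⟨(hEAiff i j true).not.mp h1, (hEAiff j i true).not.mp h2⟩⟩
    · rintro ⟨h1, h2, h3⟩
      simp only at h1; subst h1
      exact ⟨(hEAiff i j c).not.mpr h2, (hEAiff j i c).not.mpr h3⟩
  have hInS : InClassS EA := by
    refine ⟨⟨?_, ?_⟩, ?_, ?_⟩
    · rintro ⟨i, c⟩
      rintro (⟨-, h⟩ | ⟨h1, h2⟩)
      · exact hirr _ h
      · simp_all
    · rintro ⟨i, c⟩ ⟨j, d⟩ h1 h2
      rcases h1 with ⟨he, h1⟩ | ⟨hc, hd⟩ <;> rcases h2 with ⟨he', h2⟩ | ⟨hc', hd'⟩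
      · exact hasym _ _ h1 h2
      · simp_all
      · simp_all
      · simp_all
    · constructor
      · rintro ⟨i, c⟩
        exact (hPerpA _ _).mpr ⟨rfl, hequiv.refl _⟩
      · intro p q h
        obtain ⟨h1, h2⟩ := (hPerpA p q).mp h
        exact (hPerpA q p).mpr ⟨h1.symm, hequiv.symm h2⟩
      · intro p q r h h'
        obtain ⟨h1, h2⟩ := (hPerpA p q).mp h
        obtain ⟨h1', h2'⟩ := (hPerpA q r).mp h'
        exact (hPerpA p r).mpr ⟨h1.trans h1', hequiv.trans h2 h2'⟩
    · rintro ⟨i1, c1⟩ ⟨i2, c2⟩ ⟨j1, d1⟩ ⟨j2, d2⟩ hx hy hpx hpy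
      obtain ⟨hc, hpx'⟩ := (hPerpA _ _).mp hpx
      obtain ⟨hd, hpy'⟩ := (hPerpA _ _).mp hpy
      simp only at hc hd
      subst hc; subst hd
      have hi : i1 ≠ i2 := fun h => hx (by simp [h])
      have hj : j1 ≠ j2 := fun h => hy (by simp [h])
      rcases c1 with _ | _ <;> rcases d1 with _ | _
      · -- both copies false
        have := hpar (v i1) (v i2) (v j1) (v j2)
          (fun h => hi (hvinj h)) (fun h => hj (hvinj h)) hpx' hpy'
        rw [hite, hite, hite, hite]; exact this
      · -- false → true : all four edges
        simp only [if_pos (hEAcross _ _)]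
        decide
      · -- true → false : no edges
        have hno : ∀ i j, ¬ EA (i, true) (j, false) := by
          rintro i j (⟨h, -⟩ | ⟨h, -⟩) <;> simp_all
        simp only [if_neg (hno _ _)]
        decide
      · have := hpar (v i1) (v i2) (v j1) (v j2)
          (fun h => hi (hvinj h)) (fun h => hj (hvinj h)) hpx' hpy'
        rw [hite, hite, hite, hite]; exact this
  obtain ⟨f, hfinj, hfE⟩ := hS.rich (Fin n × Bool) (by infer_instance) EA hInS
  -- first automorphism: identify F with copy "false"
  set f0 : S → S := fun s => if hs : s ∈ F then f (F.equivFin ⟨s, hs⟩, false) else s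
    with hf0
  have hf0val : ∀ a (ha : a ∈ F), f0 a = f (F.equivFin ⟨a, ha⟩, false) := by
    intro a ha; simp [hf0, ha]
  have hinj0 : Set.InjOn f0 ↑F := by
    intro a ha b hb hab
    rw [Finset.mem_coe] at ha hb
    rw [hf0val a ha, hf0val b hb] at hab
    have := hfinj hab
    have := F.equivFin.injective (Prod.ext_iff.mp this).1
    exact congrArg Subtype.val this
  have hedge0 : ∀ a ∈ F, ∀ b ∈ F, (E (f0 a) (f0 b) ↔ E a b) := by
    intro a ha b hb
    rw [hf0val a ha, hf0val b hb, hfE, hEAiff, hvidx, hvidx]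
  obtain ⟨h, hhaut, hhF⟩ := hS.ultrahomogeneous F f0 hinj0 hedge0
  -- second automorphism: send F to (h.symm of) copy "true"
  set f1 : S → S := fun s =>
    if hs : s ∈ F then h.symm (f (F.equivFin ⟨s, hs⟩, true)) else s with hf1
  have hf1val : ∀ a (ha : a ∈ F), f1 a = h.symm (f (F.equivFin ⟨a, ha⟩, true)) := by
    intro a ha; simp [hf1, ha]
  have hsymmE : ∀ x y, E (h.symm x) (h.symm y) ↔ E x y := by
    intro x y
    conv_rhs => rw [← h.apply_symm_apply x, ← h.apply_symm_apply y]
    exact (hhaut _ _).symm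
  have hinj1 : Set.InjOn f1 ↑F := by
    intro a ha b hb hab
    rw [Finset.mem_coe] at ha hb
    rw [hf1val a ha, hf1val b hb] at hab
    have := hfinj (h.symm.injective hab)
    have := F.equivFin.injective (Prod.ext_iff.mp this).1
    exact congrArg Subtype.val this
  have hedge1 : ∀ a ∈ F, ∀ b ∈ F, (E (f1 a) (f1 b) ↔ E a b) := by
    intro a ha b hb
    rw [hf1val a ha, hf1val b hb, hsymmE, hfE, hEAiff, hvidx, hvidx]
  obtain ⟨g, hgaut, hgF⟩ := hS.ultrahomogeneous F f1 hinj1 hedge1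
  refine ⟨g, hgaut, ?_⟩
  intro a ha b hb hperp
  rw [hgF a ha, hf1val a ha] at hperp
  have hb' : b = h.symm (f (F.equivFin ⟨b, hb⟩, false)) := by
    rw [← hf0val b hb, ← hhF b hb, h.symm_apply_apply]
  rw [hb'] at hperp
  obtain ⟨hp1, hp2⟩ := hperp
  rw [hsymmE, hfE] at hp1 hp2
  exact hp2 (hEAcross _ _)
end
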